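/- Let S be a finite set of points in the plane with pairwise distinct x-coordinates and pairwise distinct y-coordinates, each colored red or blue. If p ∈ S is contained in a safe axis-aligned box B, then p does not participate in S, i.e., there is no point q ∈ S of the opposite color such that the open axis-aligned rectangle spanned by p and q contains no point of S. -/

import Mathlib

open Classical

noncomputable section

abbrev Pt := ℝ × ℝ

/-- An axis-aligned box in the plane. -/
structure Box where
  x0 : ℝ
  x1 : ℝ
  y0 : ℝ
  y1 : ℝ
  hx : x0 < x1
  hy : y0 < y1

/-- The cross of a box: the union of its vertical and horizontal strips. -/
def Box.cross (B : Box) : Set Pt :=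
  {p | (B.x0 ≤ p.1 ∧ p.1 ≤ B.x1) ∨ (B.y0 ≤ p.2 ∧ p.2 ≤ B.y1)}

/-- The four open quadrants of a box. -/
def Box.NE (B : Box) : Set Pt := {p | B.x1 < p.1 ∧ B.y1 < p.2}
def Box.NW (B : Box) : Set Pt := {p | p.1 < B.x0 ∧ B.y1 < p.2}
def Box.SE (B : Box) : Set Pt := {p | B.x1 < p.1 ∧ p.2 < B.y0}
def Box.SW (B : Box) : Set Pt := {p | p.1 < B.x0 ∧ p.2 < B.y0}

/-- Membership in the open interior of a box. -/
def Box.inside (B : Box) (p : Pt) : Prop :=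
  B.x0 < p.1 ∧ p.1 < B.x1 ∧ B.y0 < p.2 ∧ p.2 < B.y1

/-- Membership in the closed box. -/
def Box.memClosed (B : Box) (p : Pt) : Prop :=
  B.x0 ≤ p.1 ∧ p.1 ≤ B.x1 ∧ B.y0 ≤ p.2 ∧ p.2 ≤ B.y1

/-- `p` avoids the boundary lines of the box and of its quadrants. -/
def Box.offBoundary (B : Box) (p : Pt) : Prop :=
  p.1 ≠ B.x0 ∧ p.1 ≠ B.x1 ∧ p.2 ≠ B.y0 ∧ p.2 ≠ B.y1

/-- Minimal points of `T` towards the SW corner of the NE quadrant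
(the usual minimal points under coordinatewise domination). -/
def neMinSet (T : Set Pt) : Set Pt :=
  {p ∈ T | ∀ q ∈ T, (q.1 ≤ p.1 ∧ q.2 ≤ p.2) → q = p}

/-- Minimal points of `T` towards the SE corner of the NW quadrant. -/
def nwMinSet (T : Set Pt) : Set Pt :=
  {p ∈ T | ∀ q ∈ T, (p.1 ≤ q.1 ∧ q.2 ≤ p.2) → q = p}

/-- Minimal points of `T` towards the NW corner of the SE quadrant. -/
def seMinSet (T : Set Pt) : Set Pt :=
  {p ∈ T | ∀ q ∈ T, (q.1 ≤ p.1 ∧ p.2 ≤ q.2) → q = p}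

/-- Minimal points of `T` towards the NE corner of the SW quadrant
(the usual maximal points under coordinatewise domination). -/
def swMinSet (T : Set Pt) : Set Pt :=
  {p ∈ T | ∀ q ∈ T, (p.1 ≤ q.1 ∧ p.2 ≤ q.2) → q = p}

/-- `z` lies in the open axis-aligned rectangle spanned by `p` and `q`. -/
def openRect (p q z : Pt) : Prop :=
  min p.1 q.1 < z.1 ∧ z.1 < max p.1 q.1 ∧ min p.2 q.2 < z.2 ∧ z.2 < max p.2 q.2

/-- `p` and `q` see each other in `S`: the open rectangle they span is empty of `S`. -/
def sees (S : Set Pt) (p q : Pt) : Prop := ∀ z ∈ S, ¬ openRect p q z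

/-- `p` participates in `S`: some point of the opposite color sees `p`. -/
def participates (S : Set Pt) (color : Pt → Bool) (p : Pt) : Prop :=
  ∃ q ∈ S, color q ≠ color p ∧ sees S p q

/-- All points of `S` in the cross of `B` have color `c`. -/
def crossSafeFor (S : Set Pt) (color : Pt → Bool) (c : Bool) (B : Box) : Prop :=
  ∀ p ∈ S, p ∈ B.cross → color p = c

/-- `B` is `c`-safe for `S`: `c`-cross-safe and the four directional minimal
sets of the quadrants only contain points of color `c`. -/
def safeFor (S : Set Pt) (color : Pt → Bool) (c : Bool) (B : Box) : Prop :=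
  crossSafeFor S color c B ∧
  (∀ p ∈ neMinSet (S ∩ B.NE), color p = c) ∧
  (∀ p ∈ nwMinSet (S ∩ B.NW), color p = c) ∧
  (∀ p ∈ seMinSet (S ∩ B.SE), color p = c) ∧
  (∀ p ∈ swMinSet (S ∩ B.SW), color p = c)

/-- `B` is safe: red-safe (`true`) or blue-safe (`false`). -/
def isSafe (S : Set Pt) (color : Pt → Bool) (B : Box) : Prop :=
  safeFor S color true B ∨ safeFor S color false B

/-- General position: pairwise distinct x-coordinates and y-coordinates. -/
def genPos (S : Set Pt) : Prop :=
  ∀ p ∈ S, ∀ q ∈ S, p ≠ q → p.1 ≠ q.1 ∧ p.2 ≠ q.2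

/-!
If a point `q` of the other color saw `p`, it could not lie in the cross of `B` (which carries
`p`'s color), so it lies in a quadrant `Q`. Going from `q` towards the box within `Q` ends at a
directional minimal point `m` of `S ∩ Q`, which has `p`'s color and hence differs from `q`; by
general position `m` is then strictly inside the rectangle spanned by `p` and `q`.
-/

open Set OrderDual Function

theorem exists_le_minimal_of_injective {β α : Type*} [PartialOrder α] (f : β → α)
    (hf : Injective f) {T : Set β} (hT : T.Finite) {q : β} (hq : q ∈ T) :
    ∃ m ∈ T, f m ≤ f q ∧ ∀ r ∈ T, f r ≤ f m → r = m := by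
  obtain ⟨_, hle, ⟨m, hm, rfl⟩, hmin⟩ :=
    (hT.image f).isPWO.exists_le_minimal (mem_image_of_mem f hq)
  exact ⟨m, hm, hle, fun r hr hrm => hf (le_antisymm hrm (hmin (mem_image_of_mem f hr) hrm))⟩

section MinSets

/- The directional minimal sets are the minimal sets for the product order after reversing
coordinates with `toDual`. -/

variable {T : Set Pt} {q : Pt}

theorem exists_mem_neMinSet_le (hT : T.Finite) (hq : q ∈ T) :
    ∃ m ∈ neMinSet T, m.1 ≤ q.1 ∧ m.2 ≤ q.2 := by
  obtain ⟨m, hm, hmq, hmin⟩ := exists_le_minimal_of_injective id injective_id hT hq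
  exact ⟨m, ⟨hm, hmin⟩, hmq⟩

theorem exists_mem_nwMinSet_le (hT : T.Finite) (hq : q ∈ T) :
    ∃ m ∈ nwMinSet T, q.1 ≤ m.1 ∧ m.2 ≤ q.2 := by
  obtain ⟨m, hm, hmq, hmin⟩ := exists_le_minimal_of_injective (Prod.map toDual id)
    (toDual.injective.prodMap injective_id) hT hq
  exact ⟨m, ⟨hm, hmin⟩, hmq⟩

theorem exists_mem_seMinSet_le (hT : T.Finite) (hq : q ∈ T) :
    ∃ m ∈ seMinSet T, m.1 ≤ q.1 ∧ q.2 ≤ m.2 := by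
  obtain ⟨m, hm, hmq, hmin⟩ := exists_le_minimal_of_injective (Prod.map id toDual)
    (injective_id.prodMap toDual.injective) hT hq
  exact ⟨m, ⟨hm, hmin⟩, hmq⟩

theorem exists_mem_swMinSet_le (hT : T.Finite) (hq : q ∈ T) :
    ∃ m ∈ swMinSet T, q.1 ≤ m.1 ∧ q.2 ≤ m.2 := by
  obtain ⟨m, hm, hmq, hmin⟩ := exists_le_minimal_of_injective (Prod.map toDual toDual)
    (toDual.injective.prodMap toDual.injective) hT hq
  exact ⟨m, ⟨hm, hmin⟩, hmq⟩

end MinSets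

theorem openRect_iff {p q z : Pt} :
    openRect p q z ↔ z.1 ∈ uIoo p.1 q.1 ∧ z.2 ∈ uIoo p.2 q.2 :=
  and_assoc.symm

theorem Box.mem_quadrant_of_notMem_cross {B : Box} {q : Pt} (hq : q ∉ B.cross) :
    q ∈ B.NE ∨ q ∈ B.NW ∨ q ∈ B.SE ∨ q ∈ B.SW := by
  simp only [Box.cross, Box.NE, Box.NW, Box.SE, Box.SW, mem_ofPred_eq, not_or, not_and_or,
    not_le] at hq ⊢
  rcases hq with ⟨hx | hx, hy | hy⟩ <;> simp [*]

namespace Box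

variable {S : Set Pt} {B : Box} {p q : Pt}

theorem exists_mem_neMinSet_eq_or_openRect (hS : S.Finite) (hgp : genPos S) (hp : B.inside p)
    (hq : q ∈ S ∩ B.NE) : ∃ m ∈ neMinSet (S ∩ B.NE), m = q ∨ openRect p q m := by
  obtain ⟨m, hm, hmx, hmy⟩ := exists_mem_neMinSet_le (hS.inter_of_left _) hq
  refine ⟨m, hm, or_iff_not_imp_left.2 fun hmq => ?_⟩
  obtain ⟨hx, hy⟩ := hgp m hm.1.1 q hq.1 hmq
  exact openRect_iff.2 ⟨mem_uIoo_of_lt (hp.2.1.trans hm.1.2.1) (hmx.lt_of_ne hx),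
    mem_uIoo_of_lt (hp.2.2.2.trans hm.1.2.2) (hmy.lt_of_ne hy)⟩

theorem exists_mem_nwMinSet_eq_or_openRect (hS : S.Finite) (hgp : genPos S) (hp : B.inside p)
    (hq : q ∈ S ∩ B.NW) : ∃ m ∈ nwMinSet (S ∩ B.NW), m = q ∨ openRect p q m := by
  obtain ⟨m, hm, hmx, hmy⟩ := exists_mem_nwMinSet_le (hS.inter_of_left _) hq
  refine ⟨m, hm, or_iff_not_imp_left.2 fun hmq => ?_⟩
  obtain ⟨hx, hy⟩ := hgp m hm.1.1 q hq.1 hmq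
  exact openRect_iff.2 ⟨mem_uIoo_of_gt (hmx.lt_of_ne hx.symm) (hm.1.2.1.trans hp.1),
    mem_uIoo_of_lt (hp.2.2.2.trans hm.1.2.2) (hmy.lt_of_ne hy)⟩

theorem exists_mem_seMinSet_eq_or_openRect (hS : S.Finite) (hgp : genPos S) (hp : B.inside p)
    (hq : q ∈ S ∩ B.SE) : ∃ m ∈ seMinSet (S ∩ B.SE), m = q ∨ openRect p q m := by
  obtain ⟨m, hm, hmx, hmy⟩ := exists_mem_seMinSet_le (hS.inter_of_left _) hq
  refine ⟨m, hm, or_iff_not_imp_left.2 fun hmq => ?_⟩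
  obtain ⟨hx, hy⟩ := hgp m hm.1.1 q hq.1 hmq
  exact openRect_iff.2 ⟨mem_uIoo_of_lt (hp.2.1.trans hm.1.2.1) (hmx.lt_of_ne hx),
    mem_uIoo_of_gt (hmy.lt_of_ne hy.symm) (hm.1.2.2.trans hp.2.2.1)⟩

theorem exists_mem_swMinSet_eq_or_openRect (hS : S.Finite) (hgp : genPos S) (hp : B.inside p)
    (hq : q ∈ S ∩ B.SW) : ∃ m ∈ swMinSet (S ∩ B.SW), m = q ∨ openRect p q m := by
  obtain ⟨m, hm, hmx, hmy⟩ := exists_mem_swMinSet_le (hS.inter_of_left _) hq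
  refine ⟨m, hm, or_iff_not_imp_left.2 fun hmq => ?_⟩
  obtain ⟨hx, hy⟩ := hgp m hm.1.1 q hq.1 hmq
  exact openRect_iff.2 ⟨mem_uIoo_of_gt (hmx.lt_of_ne hx.symm) (hm.1.2.1.trans hp.1),
    mem_uIoo_of_gt (hmy.lt_of_ne hy.symm) (hm.1.2.2.trans hp.2.2.1)⟩

end Box

theorem not_participates_of_safeFor {S : Set Pt} {color : Pt → Bool} {c : Bool} {B : Box}
    {p : Pt} (hS : S.Finite) (hgp : genPos S) (hp : p ∈ S) (hpB : B.inside p)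
    (hsafe : safeFor S color c B) : ¬ participates S color p := by
  rintro ⟨q, hq, hqp, hsees⟩
  obtain ⟨hcross, hNE, hNW, hSE, hSW⟩ := hsafe
  have hqc : color q ≠ c := hcross p hp (Or.inl ⟨hpB.1.le, hpB.2.1.le⟩) ▸ hqp
  have hqB : q ∉ B.cross := fun h => hqc (hcross q hq h)
  obtain ⟨m, hmS, hmc, rfl | hm⟩ : ∃ m ∈ S, color m = c ∧ (m = q ∨ openRect p q m) := by
    rcases B.mem_quadrant_of_notMem_cross hqB with hQ | hQ | hQ | hQ
    · obtain ⟨m, hm, hmq⟩ := B.exists_mem_neMinSet_eq_or_openRect hS hgp hpB ⟨hq, hQ⟩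
      exact ⟨m, hm.1.1, hNE m hm, hmq⟩
    · obtain ⟨m, hm, hmq⟩ := B.exists_mem_nwMinSet_eq_or_openRect hS hgp hpB ⟨hq, hQ⟩
      exact ⟨m, hm.1.1, hNW m hm, hmq⟩
    · obtain ⟨m, hm, hmq⟩ := B.exists_mem_seMinSet_eq_or_openRect hS hgp hpB ⟨hq, hQ⟩
      exact ⟨m, hm.1.1, hSE m hm, hmq⟩
    · obtain ⟨m, hm, hmq⟩ := B.exists_mem_swMinSet_eq_or_openRect hS hgp hpB ⟨hq, hQ⟩
      exact ⟨m, hm.1.1, hSW m hm, hmq⟩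
  · exact hqc hmc
  · exact hsees m hmS hm

theorem stmt1 (S : Finset Pt) (color : Pt → Bool) (hgp : genPos (↑S : Set Pt))
    (B : Box)
    (p : Pt) (hp : p ∈ S) (hpB : B.inside p)
    (hsafe : isSafe (↑S : Set Pt) color B) :
    ¬ participates (↑S : Set Pt) color p := by
  rcases hsafe with h | h <;> exact not_participates_of_safeFor S.finite_toSet hgp hp hpB h
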